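/- arXiv:2002.02523 — 5 statements merged into one kernel-verified Lean document; each statement's English description precedes it below -/
import Mathlib

section
/- For any finite simple graph G on n vertices with no isolated vertices, the maximum size of a minimal vertex cover of G is at least 2√n − 2. -/
open Finset

lemma exists_star_fn {V : Type*} (G : SimpleGraph V) :
    ∀ s : Finset V, (∀ v ∈ s, ∃ u ∈ s, G.Adj v u) →
    ∃ F : V → V, (∀ v, v ∉ s → F v = v) ∧ (∀ v ∈ s, F v ∈ s) ∧
      (∀ v, F v = v ∨ G.Adj v (F v)) ∧ (∀ v, F (F v) = F v) ∧
      (∀ x ∈ s, F x = x → ∃ y, y ≠ x ∧ F y = x) := by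
  classical
  intro s
  induction s using Finset.strongInduction with
  | _ s ih =>
    intro h
    rcases s.eq_empty_or_nonempty with rfl | ⟨v₀, hv₀⟩
    · exact ⟨id, fun v _ => rfl, fun v hv => hv, fun v => Or.inl rfl,
        fun v => rfl, fun x hx => absurd hx (by simp)⟩
    obtain ⟨u₀, hu₀s, hadj⟩ := h v₀ hv₀
    have hne : v₀ ≠ u₀ := hadj.ne
    set T : Finset V := s.filter
      (fun w => w = u₀ ∨ w = v₀ ∨ ∀ z ∈ s, G.Adj w z → (z = u₀ ∨ z = v₀)) with hT
    have hTs : T ⊆ s := filter_subset _ _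
    have hu₀T : u₀ ∈ T := mem_filter.2 ⟨hu₀s, Or.inl rfl⟩
    have hv₀T : v₀ ∈ T := mem_filter.2 ⟨hv₀, Or.inr (Or.inl rfl)⟩
    set s' : Finset V := s \ T with hs'
    have hs'T : ∀ v ∈ s', v ∉ T := fun v hv => (mem_sdiff.1 hv).2
    have hs's : s' ⊆ s := sdiff_subset
    have hss : s' ⊂ s := ssubset_iff_of_subset hs's |>.2 ⟨v₀, hv₀, fun hc => (hs'T v₀ hc) hv₀T⟩
    have hnotT : ∀ w ∈ s, w ∉ T → w ≠ u₀ ∧ w ≠ v₀ ∧ ∃ z ∈ s, G.Adj w z ∧ z ≠ u₀ ∧ z ≠ v₀ := by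
      intro w hw hwT
      rw [hT, mem_filter] at hwT
      push_neg at hwT
      obtain ⟨h1, h2, h3⟩ := hwT hw
      obtain ⟨z, hz, hadjz, hzne⟩ := h3
      exact ⟨h1, h2, z, hz, hadjz, hzne⟩
    have h' : ∀ v ∈ s', ∃ u ∈ s', G.Adj v u := by
      intro w hw
      obtain ⟨hw1, hw2, z, hzs, hadjz, hz1, hz2⟩ := hnotT w (hs's hw) (hs'T w hw)
      refine ⟨z, mem_sdiff.2 ⟨hzs, ?_⟩, hadjz⟩
      intro hzT
      rw [hT, mem_filter] at hzT
      rcases hzT.2 with rfl | rfl | h3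
      · exact hz1 rfl
      · exact hz2 rfl
      · rcases h3 w (hs's hw) hadjz.symm with rfl | rfl
        · exact hw1 rfl
        · exact hw2 rfl
    obtain ⟨F', hF1, hF2, hF3, hF4, hF5⟩ := ih s' hss h'
    have hF'notT : ∀ v, v ∉ T → F' v ∉ T := by
      intro v hvT
      by_cases hvs : v ∈ s
      · exact hs'T _ (hF2 v (mem_sdiff.2 ⟨hvs, hvT⟩))
      · rw [hF1 v (fun hv => hvs (hs's hv))]
        exact hvT
    -- fact A: members of T other than u₀ not adjacent to u₀ are adjacent to v₀
    set Tu : Finset V := T.filter (fun w => G.Adj w u₀) with hTu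
    have hv₀Tu : v₀ ∈ Tu := mem_filter.2 ⟨hv₀T, hadj⟩
    have hu₀Tu : u₀ ∉ Tu := fun hc => G.irrefl (mem_filter.1 hc).2
    have factA : ∀ w ∈ T, w ≠ u₀ → w ∉ Tu → G.Adj w v₀ := by
      intro w hwT hwu hwTu
      have hwadj : ¬ G.Adj w u₀ := fun hc => hwTu (mem_filter.2 ⟨hwT, hc⟩)
      have hws : w ∈ s := hTs hwT
      rcases (mem_filter.1 hwT).2 with rfl | rfl | h3
      · exact absurd rfl hwu
      · exact absurd hadj (by simpa using hwadj)
      · obtain ⟨z, hzs, hadjz⟩ := h w hws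
        rcases h3 z hzs hadjz with rfl | rfl
        · exact absurd hadjz hwadj
        · exact hadjz
    -- one-star constructor
    have onestar : ∀ c y₀ : V, c ∈ T → y₀ ∈ T → y₀ ≠ c →
        (∀ w ∈ T, w ≠ c → G.Adj w c) →
        ∃ F : V → V, (∀ v, v ∉ s → F v = v) ∧ (∀ v ∈ s, F v ∈ s) ∧
          (∀ v, F v = v ∨ G.Adj v (F v)) ∧ (∀ v, F (F v) = F v) ∧
          (∀ x ∈ s, F x = x → ∃ y, y ≠ x ∧ F y = x) := by
      intro c y₀ hcT hy₀T hy₀c hstar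
      refine ⟨fun w => if w ∈ T then c else F' w, ?_, ?_, ?_, ?_, ?_⟩ <;> dsimp only
      · intro v hv
        rw [if_neg (fun hc : v ∈ T => hv (hTs hc))]
        exact hF1 v (fun hc => hv (hs's hc))
      · intro v hv
        by_cases hvT : v ∈ T
        · rw [if_pos hvT]; exact hTs hcT
        · rw [if_neg hvT]; exact hs's (hF2 v (mem_sdiff.2 ⟨hv, hvT⟩))
      · intro v
        by_cases hvT : v ∈ T
        · rw [if_pos hvT]
          by_cases hvc : v = c
          · exact Or.inl hvc.symm
          · exact Or.inr (hstar v hvT hvc)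
        · rw [if_neg hvT]; exact hF3 v
      · intro v
        by_cases hvT : v ∈ T
        · rw [if_pos hvT, if_pos hcT]
        · rw [if_neg hvT, if_neg (hF'notT v hvT)]
          exact hF4 v
      · intro x hx hFx
        by_cases hxT : x ∈ T
        · rw [if_pos hxT] at hFx
          subst hFx
          exact ⟨y₀, hy₀c, by rw [if_pos hy₀T]⟩
        · rw [if_neg hxT] at hFx
          obtain ⟨y, hy1, hy2⟩ := hF5 x (mem_sdiff.2 ⟨hx, hxT⟩) hFx
          have hyT : y ∉ T := by
            intro hyT
            have : y ∉ s' := fun hc => hs'T y hc hyT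
            rw [hF1 y this] at hy2
            exact hy1 hy2
          exact ⟨y, hy1, by rw [if_neg hyT]; exact hy2⟩
    set Tv : Finset V := (T \ Tu).erase u₀ with hTv
    by_cases hTvE : Tv = ∅
    · -- case (a): one star centered at u₀
      refine onestar u₀ v₀ hu₀T hv₀T hne ?_
      intro w hwT hwu
      by_cases hwTu : w ∈ Tu
      · exact (mem_filter.1 hwTu).2
      · exfalso
        have : w ∈ Tv := mem_erase.2 ⟨hwu, mem_sdiff.2 ⟨hwT, hwTu⟩⟩
        rw [hTvE] at this
        exact notMem_empty w this
    · obtain ⟨b, hb⟩ := nonempty_of_ne_empty hTvE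
      have hbu : b ≠ u₀ := (mem_erase.1 hb).1
      have hbT : b ∈ T := (mem_sdiff.1 (mem_erase.1 hb).2).1
      have hbTu : b ∉ Tu := (mem_sdiff.1 (mem_erase.1 hb).2).2
      have hbv : b ≠ v₀ := fun hc => hbTu (hc ▸ hv₀Tu)
      by_cases hTa : ∃ a ∈ Tu, a ≠ v₀
      · -- case (c): two stars
        obtain ⟨a, haTu, hav⟩ := hTa
        have haT : a ∈ T := (mem_filter.1 haTu).1
        have haadj : G.Adj a u₀ := (mem_filter.1 haTu).2
        have hau : a ≠ u₀ := haadj.ne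
        set Su : Finset V := insert u₀ (Tu.erase v₀) with hSu
        have hSuT : Su ⊆ T := by
          intro w hw
          rcases mem_insert.1 hw with rfl | hw2
          · exact hu₀T
          · exact (mem_filter.1 (mem_of_mem_erase hw2)).1
        have hu₀Su : u₀ ∈ Su := mem_insert_self _ _
        have hv₀Su : v₀ ∉ Su := by
          intro hc
          rcases mem_insert.1 hc with rfl | hc2
          · exact hne rfl
          · exact (mem_erase.1 hc2).1 rfl
        have haSu : a ∈ Su := mem_insert_of_mem (mem_erase.2 ⟨hav, haTu⟩)
        have hbSu : b ∉ Su := by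
          intro hc
          rcases mem_insert.1 hc with rfl | hc2
          · exact hbu rfl
          · exact hbTu (mem_of_mem_erase hc2)
        have hstar2 : ∀ w ∈ T, w ∉ Su → w ≠ v₀ → G.Adj w v₀ := by
          intro w hwT hwSu hwv
          have hwu : w ≠ u₀ := fun hc => hwSu (hc ▸ hu₀Su)
          have hwTu : w ∉ Tu := fun hc => hwSu (mem_insert_of_mem (mem_erase.2 ⟨hwv, hc⟩))
          exact factA w hwT hwu hwTu
        refine ⟨fun w => if w ∈ Su then u₀ else if w ∈ T then v₀ else F' w, ?_, ?_, ?_, ?_, ?_⟩ <;> dsimp only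
        · intro v hv
          have hvT : v ∉ T := fun hc => hv (hTs hc)
          rw [if_neg (fun hc => hvT (hSuT hc)), if_neg hvT]
          exact hF1 v (fun hc => hv (hs's hc))
        · intro v hv
          by_cases h1 : v ∈ Su
          · rw [if_pos h1]; exact hu₀s
          · rw [if_neg h1]
            by_cases h2 : v ∈ T
            · rw [if_pos h2]; exact hv₀
            · rw [if_neg h2]; exact hs's (hF2 v (mem_sdiff.2 ⟨hv, h2⟩))
        · intro v
          by_cases h1 : v ∈ Su
          · rw [if_pos h1]
            rcases mem_insert.1 h1 with rfl | h2
            · exact Or.inl rfl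
            · exact Or.inr (mem_filter.1 (mem_of_mem_erase h2)).2
          · rw [if_neg h1]
            by_cases h2 : v ∈ T
            · rw [if_pos h2]
              by_cases h3 : v = v₀
              · exact Or.inl h3.symm
              · exact Or.inr (hstar2 v h2 h1 h3)
            · rw [if_neg h2]; exact hF3 v
        · intro v
          by_cases h1 : v ∈ Su
          · rw [if_pos h1, if_pos hu₀Su]
          · rw [if_neg h1]
            by_cases h2 : v ∈ T
            · rw [if_pos h2, if_neg hv₀Su, if_pos hv₀T]
            · rw [if_neg h2]
              have h3 := hF'notT v h2
              rw [if_neg (fun hc => h3 (hSuT hc)), if_neg h3]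
              exact hF4 v
        · intro x hx hFx
          by_cases h1 : x ∈ Su
          · rw [if_pos h1] at hFx
            subst hFx
            refine ⟨a, hau, ?_⟩
            rw [if_pos haSu]
          · rw [if_neg h1] at hFx
            by_cases h2 : x ∈ T
            · rw [if_pos h2] at hFx
              subst hFx
              refine ⟨b, hbv, ?_⟩
              rw [if_neg hbSu, if_pos hbT]
            · rw [if_neg h2] at hFx
              obtain ⟨y, hy1, hy2⟩ := hF5 x (mem_sdiff.2 ⟨hx, h2⟩) hFx
              have hyT : y ∉ T := by
                intro hyT
                have : y ∉ s' := fun hc => hs'T y hc hyT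
                rw [hF1 y this] at hy2
                exact hy1 hy2
              exact ⟨y, hy1, by rw [if_neg (fun hc => hyT (hSuT hc)), if_neg hyT]; exact hy2⟩
      · -- case (b): one star centered at v₀
        push_neg at hTa
        refine onestar v₀ u₀ hv₀T hu₀T (Ne.symm hne) ?_
        intro w hwT hwv
        by_cases hwu : w = u₀
        · subst hwu; exact hadj.symm
        · refine factA w hwT hwu ?_
          intro hc
          exact hwv (hTa w hc)

/-- `W` is a vertex cover of `G`: it meets every edge. -/
def IsVC {V : Type*} (G : SimpleGraph V) (W : Finset V) : Prop :=
  ∀ ⦃u v : V⦄, G.Adj u v → u ∈ W ∨ v ∈ W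

/-- `W` is a minimal vertex cover of `G`. -/
def IsMinVC {V : Type*} (G : SimpleGraph V) (W : Finset V) : Prop :=
  IsVC G W ∧ ∀ W' : Finset V, W' ⊂ W → ¬ IsVC G W'

/-- The maximum size of a minimal vertex cover of `G`. -/
noncomputable def tauMax {V : Type*} (G : SimpleGraph V) : ℕ :=
  sSup {k : ℕ | ∃ W : Finset V, IsMinVC G W ∧ W.card = k}

theorem stmt_0 {V : Type*} [Fintype V] (G : SimpleGraph V)
    (hiso : ∀ v : V, ∃ u : V, G.Adj v u) :
    2 * Real.sqrt (Fintype.card V) - 2 ≤ (tauMax G : ℝ) := by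
  classical
  rcases isEmpty_or_nonempty V with hV | hV
  · have h0 : Fintype.card V = 0 := Fintype.card_eq_zero
    rw [h0]
    have : (0:ℝ) ≤ (tauMax G : ℝ) := Nat.cast_nonneg _
    simp only [Nat.cast_zero, Real.sqrt_zero]
    linarith
  -- star structure
  obtain ⟨F, hF1, hF2, hF3, hF4, hF5⟩ := exists_star_fn G Finset.univ
    (fun v _ => by obtain ⟨u, hu⟩ := hiso v; exact ⟨u, Finset.mem_univ u, hu⟩)
  set n := Fintype.card V with hn
  set C : Finset V := Finset.univ.filter (fun x => F x = x) with hC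
  have hmemC : ∀ v : V, F v ∈ C := fun v => Finset.mem_filter.2 ⟨Finset.mem_univ _, hF4 v⟩
  have hCne : C.Nonempty := ⟨F (Classical.arbitrary V), hmemC _⟩
  set fU : V → ℕ := fun x => (Finset.univ.filter (fun v => F v = x)).card with hfU
  have hntot : n = ∑ x ∈ C, fU x := by
    rw [hn, ← Finset.card_univ]
    exact Finset.card_eq_sum_card_fiberwise (fun v _ => hmemC v)
  obtain ⟨xs, hxsC, hxsmax⟩ := C.exists_max_image fU hCne
  have hnle : n ≤ C.card * fU xs := by
    rw [hntot]
    calc ∑ x ∈ C, fU x ≤ ∑ _x ∈ C, fU xs := Finset.sum_le_sum (fun x hx => hxsmax x hx)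
    _ = C.card * fU xs := by rw [Finset.sum_const, smul_eq_mul]
  -- maximal independent set containing xs
  set fam : Finset (Finset V) := Finset.univ.powerset.filter
    (fun J => xs ∈ J ∧ ∀ u ∈ J, ∀ v ∈ J, ¬ G.Adj u v) with hfam
  have hfamne : fam.Nonempty := by
    refine ⟨{xs}, Finset.mem_filter.2 ⟨Finset.mem_powerset.2 (Finset.subset_univ _),
      Finset.mem_singleton_self xs, ?_⟩⟩
    intro u hu v hv
    rw [Finset.mem_singleton] at hu hv
    subst hu; subst hv
    exact G.irrefl
  obtain ⟨I, hIfam, hImax⟩ := fam.exists_max_image Finset.card hfamne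
  obtain ⟨-, hxsI, hInd⟩ := Finset.mem_filter.1 hIfam
  have hdom : ∀ w : V, w ∉ I → ∃ z ∈ I, G.Adj w z := by
    intro w hw
    by_contra hcon
    push_neg at hcon
    have hmem : insert w I ∈ fam := by
      refine Finset.mem_filter.2 ⟨Finset.mem_powerset.2 (Finset.subset_univ _),
        Finset.mem_insert_of_mem hxsI, ?_⟩
      intro u hu v hv
      rcases Finset.mem_insert.1 hu with rfl | hu' <;> rcases Finset.mem_insert.1 hv with rfl | hv'
      · exact G.irrefl
      · exact hcon v hv'
      · exact fun hc => hcon u hu' hc.symm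
      · exact hInd u hu' v hv'
    have := hImax _ hmem
    rw [Finset.card_insert_of_notMem hw] at this
    omega
  -- the complementary minimal vertex cover
  set W : Finset V := Finset.univ \ I with hW
  have hWI : ∀ v : V, v ∉ W ↔ v ∈ I := by
    intro v
    simp [hW]
  have hWmin : IsMinVC G W := by
    constructor
    · intro u v huv
      by_contra hcon
      push_neg at hcon
      exact hInd u ((hWI u).1 hcon.1) v ((hWI v).1 hcon.2) huv
    · intro W' hW' hVC
      obtain ⟨w, hwW, hwW'⟩ := Finset.exists_of_ssubset hW'
      have hwI : w ∉ I := (Finset.mem_sdiff.1 hwW).2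
      obtain ⟨z, hzI, hzadj⟩ := hdom w hwI
      rcases hVC hzadj.symm with hc | hc
      · have : z ∉ W := (hWI z).2 hzI
        exact this (hW'.1 hc)
      · exact hwW' hc
  have hbdd : BddAbove {k : ℕ | ∃ W : Finset V, IsMinVC G W ∧ W.card = k} := by
    refine ⟨Fintype.card V, ?_⟩
    rintro k ⟨Wk, -, rfl⟩
    exact Finset.card_le_univ Wk
  have hτ : W.card ≤ tauMax G := le_csSup hbdd ⟨W, hWmin, rfl⟩
  set fI : V → ℕ := fun x => (I.filter (fun v => F v = x)).card with hfI
  have hadjfib : ∀ y x : V, F y = x → y ≠ x → G.Adj y x := by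
    intro y x hyx hne
    rcases hF3 y with h | h
    · rw [hyx] at h; exact absurd h.symm hne
    · rwa [hyx] at h
  have hItot : I.card = ∑ x ∈ C, fI x :=
    Finset.card_eq_sum_card_fiberwise (fun v _ => hmemC v)
  have hsub1 : ∀ x : V, x ∈ I → fI x ≤ 1 := by
    intro x hxI
    refine Finset.card_le_one.2 ?_
    intro y hy z hz
    have hy' := Finset.mem_filter.1 hy
    have hz' := Finset.mem_filter.1 hz
    have hyx : y = x := by
      by_contra hne
      exact hInd y hy'.1 x hxI (hadjfib y x hy'.2 hne)
    have hzx : z = x := by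
      by_contra hne
      exact hInd z hz'.1 x hxI (hadjfib z x hz'.2 hne)
    rw [hyx, hzx]
  have hfixs : fI xs ≤ 1 := hsub1 xs hxsI
  have key2 : ∀ x ∈ C.erase xs, fI x + 1 ≤ fU x := by
    intro x hx
    have hxC := Finset.mem_of_mem_erase hx
    have hxfix : F x = x := (Finset.mem_filter.1 hxC).2
    have hxfib : x ∈ Finset.univ.filter (fun v => F v = x) :=
      Finset.mem_filter.2 ⟨Finset.mem_univ _, hxfix⟩
    by_cases hxI : x ∈ I
    · obtain ⟨y, hyne, hyx⟩ := hF5 x (Finset.mem_univ x) hxfix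
      have hyfib : y ∈ Finset.univ.filter (fun v => F v = x) :=
        Finset.mem_filter.2 ⟨Finset.mem_univ _, hyx⟩
      have h2 : 1 < fU x := Finset.one_lt_card.2 ⟨y, hyfib, x, hxfib, hyne⟩
      have h3 := hsub1 x hxI
      omega
    · have hss : I.filter (fun v => F v = x) ⊆
          (Finset.univ.filter (fun v => F v = x)).erase x := by
        intro y hy
        have hy' := Finset.mem_filter.1 hy
        refine Finset.mem_erase.2 ⟨?_, Finset.mem_filter.2 ⟨Finset.mem_univ _, hy'.2⟩⟩
        rintro rfl
        exact hxI hy'.1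
      have h1 : fI x ≤ fU x - 1 := by
        have h1a := Finset.card_le_card hss
        rwa [Finset.card_erase_of_mem hxfib] at h1a
      have h2 : 1 ≤ fU x := Finset.card_pos.2 ⟨x, hxfib⟩
      omega
  have hsplitU := Finset.add_sum_erase C fU hxsC
  have hsplitI := Finset.add_sum_erase C fI hxsC
  have hsum2 : (∑ x ∈ C.erase xs, fI x) + (C.erase xs).card ≤ ∑ x ∈ C.erase xs, fU x := by
    calc (∑ x ∈ C.erase xs, fI x) + (C.erase xs).card
        = ∑ x ∈ C.erase xs, (fI x + 1) := by
          rw [Finset.sum_add_distrib, Finset.sum_const, smul_eq_mul, mul_one]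
      _ ≤ ∑ x ∈ C.erase xs, fU x := Finset.sum_le_sum key2
  have hcard : (C.erase xs).card + 1 = C.card := Finset.card_erase_add_one hxsC
  have hWcard : W.card + I.card = n := by
    rw [hW, Finset.card_sdiff_add_card_eq_card (Finset.subset_univ I), Finset.card_univ]
  have hgoalNat : C.card + fU xs ≤ W.card + 2 := by
    linarith [hntot, hItot, hsplitU, hsplitI, hsum2, hcard, hWcard, hfixs]
  have hτ2 : C.card + fU xs ≤ tauMax G + 2 := by omega
  have hcast : (n:ℝ) ≤ (C.card : ℝ) * (fU xs : ℝ) := by exact_mod_cast hnle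
  have h1 : Real.sqrt n ≤ Real.sqrt ((C.card : ℝ) * (fU xs : ℝ)) := Real.sqrt_le_sqrt hcast
  have ha : (0:ℝ) ≤ (C.card : ℝ) := Nat.cast_nonneg _
  have hb : (0:ℝ) ≤ (fU xs : ℝ) := Nat.cast_nonneg _
  have h2 : Real.sqrt ((C.card : ℝ) * (fU xs : ℝ)) ≤ ((C.card : ℝ) + (fU xs : ℝ)) / 2 := by
    rw [Real.sqrt_mul ha]
    nlinarith [sq_nonneg (Real.sqrt (C.card : ℝ) - Real.sqrt (fU xs : ℝ)),
      Real.sq_sqrt ha, Real.sq_sqrt hb, Real.sqrt_nonneg ((C.card : ℝ)),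
      Real.sqrt_nonneg ((fU xs : ℝ))]
  have h3 : ((C.card : ℝ) + (fU xs : ℝ)) ≤ (tauMax G : ℝ) + 2 := by exact_mod_cast hτ2
  linarith
end

section
/- For any finite simple graph G on n vertices with no isolated vertices, the maximum size of a minimal vertex cover of G is at least ⌈2√n − 2⌉. -/
/-! Let `S` be a maximal independent set of minimum size. Its complement `W` is a minimal vertex
cover, so it suffices to show `4|S| ≤ |W|² + 4`. For `w ∈ W` let `N(w)` be its set of neighbours
in `S`. Trading `N(w)` for `w` and extending to a maximal independent set `S'`, every vertex that
enters `S'` has all its `S`-neighbours in `N(w)`; as `|S| ≤ |S'|`, at least `|N(w)|` vertices of `W`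
are confined to `N(w)` in this sense. Pick `w₁` with `d = |N(w₁)|` maximal. Either every vertex of
`W` has at most `d - 1` neighbours in `S \ N(w₁)`, or some `w₂` has `N(w₂)` of size `d` disjoint
from `N(w₁)`. Since no vertex is isolated, each vertex of `S` outside `X = N(w₁)`, resp.
`X = N(w₁) ∪ N(w₂)`, has a neighbour in `W` that is not confined to `X`, which gives
`|S| ≤ d + (|W| - d)(d - 1)`, resp. `|S| ≤ 2d + (|W| - 2d)d`; both imply the bound. -/

open Finset

lemma Nat.four_mul_le_sq_add_four_of_le_add_mul_pred {a k c : ℕ} (hk : 1 ≤ k)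
    (hkc : k ≤ c) (ha : a ≤ k + (c - k) * (k - 1)) : 4 * a ≤ c ^ 2 + 4 := by
  obtain ⟨e, rfl⟩ := Nat.exists_eq_add_of_le hkc
  obtain ⟨f, rfl⟩ := Nat.exists_eq_add_of_le hk
  simp only [Nat.add_sub_cancel_left] at ha
  nlinarith [sq_nonneg ((e : ℤ) - f)]

lemma Nat.four_mul_le_sq_add_four_of_le_two_mul_add_mul {a k c : ℕ} (hkc : 2 * k ≤ c)
    (ha : a ≤ 2 * k + (c - 2 * k) * k) : 4 * a ≤ c ^ 2 + 4 := by
  obtain ⟨e, rfl⟩ := Nat.exists_eq_add_of_le hkc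
  simp only [Nat.add_sub_cancel_left] at ha
  nlinarith [sq_nonneg ((k : ℤ) - 1)]

namespace SimpleGraph

variable {V : Type*} {G : SimpleGraph V}

lemma exists_maximal_isIndepSet_superset [Finite V] {B : Finset V}
    (hB : G.IsIndepSet (B : Set V)) :
    ∃ S : Finset V, B ⊆ S ∧ Maximal G.IsIndepSet (S : Set V) := by
  obtain ⟨b, hBb, hb⟩ := Finite.exists_le_maximal hB
  obtain ⟨S, rfl⟩ := b.toFinite.exists_finset_coe
  exact ⟨S, by exact_mod_cast hBb, hb⟩

lemma exists_adj_of_maximal_isIndepSet {S : Set V} (hS : Maximal G.IsIndepSet S) {v : V}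
    (hv : v ∉ S) : ∃ s ∈ S, G.Adj v s := by
  by_contra! h
  have hind : G.IsIndepSet (insert v S) :=
    hS.prop.insert fun s hs _ => ⟨h s hs, fun h' => h s hs h'.symm⟩
  exact hv (hS.le_of_ge hind (Set.subset_insert v S) (Set.mem_insert v S))

variable [Fintype V] [DecidableEq V] [DecidableRel G.Adj]

variable (G) in
def confinedTo (S X : Finset V) : Finset V :=
  {u ∈ Sᶜ | {s ∈ S | G.Adj u s} ⊆ X}

lemma confinedTo_subset_compl (S X : Finset V) : G.confinedTo S X ⊆ Sᶜ :=
  filter_subset _ _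

lemma confinedTo_mono {S X Y : Finset V} (h : X ⊆ Y) : G.confinedTo S X ⊆ G.confinedTo S Y :=
  fun _ hu => by
    rw [confinedTo, mem_filter] at hu ⊢
    exact ⟨hu.1, hu.2.trans h⟩

lemma disjoint_confinedTo {S X Y : Finset V} (hS : Maximal G.IsIndepSet (S : Set V))
    (hXY : Disjoint X Y) : Disjoint (G.confinedTo S X) (G.confinedTo S Y) := by
  refine Finset.disjoint_left.mpr fun u huX huY => ?_
  simp only [confinedTo, mem_filter, mem_compl] at huX huY
  obtain ⟨s, hs, hus⟩ := exists_adj_of_maximal_isIndepSet hS (mod_cast huX.1)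
  have hs' : s ∈ ({s ∈ S | G.Adj u s} : Finset V) := mem_filter.mpr ⟨hs, hus⟩
  exact Finset.disjoint_left.mp hXY (huX.2 hs') (huY.2 hs')

lemma card_union_le_card_confinedTo_union {S X Y : Finset V}
    (hS : Maximal G.IsIndepSet (S : Set V)) (hXY : Disjoint X Y)
    (hX : #X ≤ #(G.confinedTo S X)) (hY : #Y ≤ #(G.confinedTo S Y)) :
    #(X ∪ Y) ≤ #(G.confinedTo S (X ∪ Y)) :=
  calc #(X ∪ Y)
      = #X + #Y := card_union_of_disjoint hXY
    _ ≤ #(G.confinedTo S X) + #(G.confinedTo S Y) := add_le_add hX hY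
    _ = #(G.confinedTo S X ∪ G.confinedTo S Y) :=
        (card_union_of_disjoint (disjoint_confinedTo hS hXY)).symm
    _ ≤ #(G.confinedTo S (X ∪ Y)) :=
        card_le_card (union_subset (confinedTo_mono subset_union_left)
          (confinedTo_mono subset_union_right))

lemma card_filter_adj_le_card_confinedTo {S : Finset V}
    (hS : MinimalFor (fun T : Finset V => Maximal G.IsIndepSet (T : Set V)) card S)
    {w : V} (hw : w ∉ S) :
    #{s ∈ S | G.Adj w s} ≤ #(G.confinedTo S {s ∈ S | G.Adj w s}) := by
  set N : Finset V := {s ∈ S | G.Adj w s}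
  have hNS : N ⊆ S := filter_subset _ _
  have hB : G.IsIndepSet (insert w (S \ N) : Finset V) := by
    rw [coe_insert, coe_sdiff]
    refine (hS.prop.prop.mono Set.sdiff_subset).insert fun s hs _ => ?_
    have hws : ¬G.Adj w s := fun h => hs.2 (mem_filter.mpr ⟨hs.1, h⟩)
    exact ⟨hws, fun h => hws h.symm⟩
  obtain ⟨S', hBS', hS'⟩ := exists_maximal_isIndepSet_superset hB
  have hwS' : w ∈ S' := hBS' (mem_insert_self w _)
  have hS'sub : S' ⊆ (S \ N) ∪ G.confinedTo S N := by
    intro v hv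
    by_cases hvS : v ∈ S
    · refine mem_union_left _ (mem_sdiff.mpr ⟨hvS, fun hvN => ?_⟩)
      exact hS'.prop (mod_cast hwS') (mod_cast hv) (ne_of_mem_of_not_mem hvS hw).symm
        (mem_filter.mp hvN).2
    · refine mem_union_right _ (mem_filter.mpr ⟨mem_compl.mpr hvS, fun s hs => ?_⟩)
      obtain ⟨hsS, hvs⟩ := mem_filter.mp hs
      by_contra hsN
      have hsS' : s ∈ S' := hBS' (mem_insert_of_mem (mem_sdiff.mpr ⟨hsS, hsN⟩))
      exact hS'.prop (mod_cast hv) (mod_cast hsS') (ne_of_mem_of_not_mem hsS hvS).symm hvs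
  have hSS' : #S ≤ #S' := (le_total _ _).elim (hS.2 hS') id
  have := card_le_card hS'sub
  have := card_union_le (S \ N) (G.confinedTo S N)
  have := card_sdiff_add_card_eq_card hNS
  omega

lemma card_le_of_card_le_card_confinedTo (hiso : ∀ v, ∃ u, G.Adj v u) {S X : Finset V}
    (hS : G.IsIndepSet (S : Set V)) (hXS : X ⊆ S) (hX : #X ≤ #(G.confinedTo S X)) {m : ℕ}
    (hm : ∀ u ∉ S, #({s ∈ S | G.Adj u s} \ X) ≤ m) :
    #S ≤ #X + (#Sᶜ - #X) * m := by
  have hcover : S \ X ⊆ (Sᶜ \ G.confinedTo S X).biUnion fun u => {s ∈ S | G.Adj u s} \ X := by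
    intro s hs
    obtain ⟨hsS, hsX⟩ := mem_sdiff.mp hs
    obtain ⟨u, hsu⟩ := hiso s
    have huS : u ∉ S := fun huS => hS (mod_cast hsS) (mod_cast huS) hsu.ne hsu
    have hsu' : s ∈ ({s ∈ S | G.Adj u s} : Finset V) := mem_filter.mpr ⟨hsS, hsu.symm⟩
    refine mem_biUnion.mpr ⟨u, mem_sdiff.mpr ⟨mem_compl.mpr huS, fun hu => ?_⟩,
      mem_sdiff.mpr ⟨hsu', hsX⟩⟩
    exact hsX ((mem_filter.mp hu).2 hsu')
  have hcount : #(S \ X) ≤ #(Sᶜ \ G.confinedTo S X) * m :=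
    (card_le_card hcover).trans <| card_biUnion_le_card_mul _ _ _ fun u hu =>
      hm u (mem_compl.mp (mem_sdiff.mp hu).1)
  have hrest : #(Sᶜ \ G.confinedTo S X) ≤ #Sᶜ - #X := by
    have := card_sdiff_add_card_eq_card (confinedTo_subset_compl (G := G) S X)
    omega
  have := card_sdiff_add_card_eq_card hXS
  have := Nat.mul_le_mul_right m hrest
  omega

theorem four_mul_card_le_sq_card_compl_add_four (hiso : ∀ v, ∃ u, G.Adj v u) {S : Finset V}
    (hS : MinimalFor (fun T : Finset V => Maximal G.IsIndepSet (T : Set V)) card S) :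
    4 * #S ≤ #Sᶜ ^ 2 + 4 := by
  rcases S.eq_empty_or_nonempty with rfl | ⟨s₀, hs₀⟩
  · simp
  have hSind : G.IsIndepSet (S : Set V) := hS.prop.prop
  obtain ⟨u₀, hs₀u₀⟩ := hiso s₀
  have hu₀ : u₀ ∉ S := fun h => hSind (mod_cast hs₀) (mod_cast h) hs₀u₀.ne hs₀u₀
  obtain ⟨w₁, hw₁, hmax⟩ := Sᶜ.exists_max_image (fun u => #{s ∈ S | G.Adj u s})
    ⟨u₀, mem_compl.mpr hu₀⟩
  set X₁ : Finset V := {s ∈ S | G.Adj w₁ s}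
  have hX₁pos : 1 ≤ #X₁ := (card_pos.mpr ⟨s₀, mem_filter.mpr ⟨hs₀, hs₀u₀.symm⟩⟩).trans_le
    (hmax u₀ (mem_compl.mpr hu₀))
  have hX₁ := card_filter_adj_le_card_confinedTo hS (mem_compl.mp hw₁)
  have hX₁c := card_le_card (confinedTo_subset_compl (G := G) S X₁)
  by_cases hA : ∀ u ∉ S, #({s ∈ S | G.Adj u s} \ X₁) ≤ #X₁ - 1
  · exact Nat.four_mul_le_sq_add_four_of_le_add_mul_pred hX₁pos (hX₁.trans hX₁c)
      (card_le_of_card_le_card_confinedTo hiso hSind (filter_subset _ _) hX₁ hA)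
  push Not at hA
  obtain ⟨w₂, hw₂, hw₂big⟩ := hA
  set X₂ : Finset V := {s ∈ S | G.Adj w₂ s}
  have hX₂le : #X₂ ≤ #X₁ := hmax w₂ (mem_compl.mpr hw₂)
  have hX₂sdiff : X₂ \ X₁ = X₂ := eq_of_subset_of_card_le sdiff_subset (by omega)
  have hdisj : Disjoint X₁ X₂ := hX₂sdiff ▸ disjoint_sdiff
  have hX₂ : #X₁ = #X₂ := by
    have := congrArg card hX₂sdiff
    omega
  have hX := card_union_le_card_confinedTo_union hS.prop hdisj hX₁
    (card_filter_adj_le_card_confinedTo hS hw₂)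
  have hm : ∀ u ∉ S, #({s ∈ S | G.Adj u s} \ (X₁ ∪ X₂)) ≤ #X₁ := fun u hu =>
    (card_le_card sdiff_subset).trans (hmax u (mem_compl.mpr hu))
  have hcount := card_le_of_card_le_card_confinedTo hiso hSind
    (union_subset (filter_subset _ _) (filter_subset _ _)) hX hm
  rw [card_union_of_disjoint hdisj, ← hX₂, ← two_mul] at hcount hX
  exact Nat.four_mul_le_sq_add_four_of_le_two_mul_add_mul
    (hX.trans (card_le_card (confinedTo_subset_compl S _))) hcount

end SimpleGraph

lemma isMinVC_compl_of_maximal_isIndepSet {V : Type*} [Fintype V] [DecidableEq V]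
    {G : SimpleGraph V} {S : Finset V} (hS : Maximal G.IsIndepSet (S : Set V)) :
    IsMinVC G Sᶜ := by
  refine ⟨fun u v huv => ?_, fun W hW hWcover => ?_⟩
  · by_contra! h
    simp only [mem_compl, not_not] at h
    exact hS.prop (mod_cast h.1) (mod_cast h.2) huv.ne huv
  · obtain ⟨w, hw, hwW⟩ := exists_of_ssubset hW
    obtain ⟨s, hs, hws⟩ := G.exists_adj_of_maximal_isIndepSet hS (mod_cast mem_compl.mp hw)
    exact (hWcover hws).elim hwW fun hsW => mem_compl.mp (hW.subset hsW) (mod_cast hs)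

lemma IsMinVC.card_le_tauMax {V : Type*} [Fintype V] {G : SimpleGraph V} {W : Finset V}
    (hW : IsMinVC G W) : #W ≤ tauMax G :=
  le_csSup ⟨Fintype.card V, fun _ ⟨W', _, hW'⟩ => hW' ▸ card_le_univ W'⟩ ⟨W, hW, rfl⟩

lemma two_mul_sqrt_sub_two_le {n c : ℕ} (h : 4 * n ≤ (c + 2) ^ 2) :
    2 * √(n : ℝ) - 2 ≤ c := by
  have h' : (4 * n : ℝ) ≤ (c + 2) ^ 2 := by exact_mod_cast h
  have : √(n : ℝ) ≤ (c + 2) / 2 := Real.sqrt_le_iff.mpr ⟨by positivity, by nlinarith⟩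
  linarith

theorem stmt_1 {V : Type*} [Fintype V] (G : SimpleGraph V)
    (hiso : ∀ v : V, ∃ u : V, G.Adj v u) :
    ⌈2 * Real.sqrt (Fintype.card V) - 2⌉₊ ≤ tauMax G := by
  classical
  obtain ⟨S₀, -, hS₀⟩ := G.exists_maximal_isIndepSet_superset (B := ∅) (by simp)
  obtain ⟨S, hS⟩ := exists_minimalFor_of_wellFoundedLT
    (fun T : Finset V => Maximal G.IsIndepSet (T : Set V)) card ⟨S₀, hS₀⟩
  have hkey := G.four_mul_card_le_sq_card_compl_add_four hiso hS
  have hn : #S + #Sᶜ = Fintype.card V := card_add_card_compl S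
  refine Nat.ceil_le.mpr ((two_mul_sqrt_sub_two_le (by nlinarith)).trans ?_)
  exact_mod_cast (isMinVC_compl_of_maximal_isIndepSet hS.prop).card_le_tauMax
end

section
/- For every integer s ≥ 1, the graph H_s has s² vertices and τ_max(H_s) = 2s − 2 = 2√(s²) − 2. -/
/-- The graph `H s`: a clique on the vertices `(i, 0)`, with each clique vertex `(i, 0)`
additionally joined to the `s - 1` pendant vertices `(i, j)` for `j ≠ 0`. -/
def Hgraph (s : ℕ) : SimpleGraph (Fin s × Fin s) where
  Adj u v := u ≠ v ∧ ((u.2.val = 0 ∧ v.2.val = 0) ∨ (u.2.val = 0 ∧ u.1 = v.1) ∨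
    (v.2.val = 0 ∧ u.1 = v.1))
  symm := ⟨by rintro u v ⟨h, h2⟩; exact ⟨h.symm, by aesop⟩⟩
  loopless := ⟨fun u h => h.1 rfl⟩

/-! In a minimal vertex cover every vertex has a neighbour outside the cover. Hence a pendant
vertex lies in a minimal cover only if its clique vertex does not, and since at most one clique
vertex is missing, a minimal cover of `H s` either lies inside the clique (at most `s` vertices,
and `s ≥ 2` is forced) or is contained in the clique minus some `x_i` plus the pendants of `x_i`
(`2s - 2` vertices). The latter set is itself a minimal cover. -/

section MinimalVertexCover

variable {V : Type*} {G : SimpleGraph V} {W : Finset V}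

theorem isMinVC_iff : IsMinVC G W ↔ IsVC G W ∧ ∀ v ∈ W, ∃ u ∉ W, G.Adj v u := by
  classical
  refine ⟨fun hW => ⟨hW.1, fun v hv => ?_⟩,
    fun ⟨hVC, hnbr⟩ => ⟨hVC, fun W' hW' hVC' => ?_⟩⟩
  · by_contra! hclosed
    refine hW.2 (W.erase v) (Finset.erase_ssubset hv) fun a b hab => ?_
    rcases hW.1 hab with ha | hb
    · by_cases hav : a = v
      · subst hav
        exact Or.inr (Finset.mem_erase.2 ⟨hab.ne.symm, by_contra fun hb => hclosed b hb hab⟩)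
      · exact Or.inl (Finset.mem_erase.2 ⟨hav, ha⟩)
    · by_cases hbv : b = v
      · subst hbv
        exact Or.inl (Finset.mem_erase.2 ⟨hab.ne, by_contra fun ha => hclosed a ha hab.symm⟩)
      · exact Or.inr (Finset.mem_erase.2 ⟨hbv, hb⟩)
  · obtain ⟨v, hvW, hvW'⟩ := Finset.exists_of_ssubset hW'
    obtain ⟨u, huW, hvu⟩ := hnbr v hvW
    exact (hVC' hvu).elim hvW' fun hu => huW (hW'.1 hu)

theorem IsVC.not_adj (hW : IsVC G W) {u v : V} (hu : u ∉ W) (hv : v ∉ W) : ¬G.Adj u v :=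
  fun huv => (hW huv).elim hu hv

theorem tauMax_eq_of_isGreatest {k : ℕ} (hW : ∃ W, IsMinVC G W ∧ W.card = k)
    (hle : ∀ W, IsMinVC G W → W.card ≤ k) : tauMax G = k :=
  IsGreatest.csSup_eq ⟨hW, by rintro _ ⟨W, hW, rfl⟩; exact hle W hW⟩

end MinimalVertexCover

namespace Hgraph

open Finset

variable {s : ℕ} [NeZero s]

theorem adj_iff {u v : Fin s × Fin s} : (Hgraph s).Adj u v ↔
    u ≠ v ∧ (u.2 = 0 ∧ v.2 = 0 ∨ u.2 = 0 ∧ u.1 = v.1 ∨ v.2 = 0 ∧ u.1 = v.1) := by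
  simp only [Hgraph, Fin.val_eq_zero_iff]

theorem adj_iff_of_snd_ne_zero {v u : Fin s × Fin s} (hv : v.2 ≠ 0) :
    (Hgraph s).Adj v u ↔ u = (v.1, 0) := by
  rw [adj_iff]
  grind

/-- The clique minus `(i, 0)`, plus the pendant vertices of `(i, 0)`. -/
def cover (i : Fin s) : Finset (Fin s × Fin s) :=
  (univ.erase i ×ˢ {0}) ∪ ({i} ×ˢ univ.erase 0)

theorem mem_cover {i : Fin s} {v : Fin s × Fin s} :
    v ∈ cover i ↔ v.1 ≠ i ∧ v.2 = 0 ∨ v.1 = i ∧ v.2 ≠ 0 := by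
  obtain ⟨a, b⟩ := v
  simp only [cover, mem_union, mem_product, mem_erase, mem_singleton, mem_univ, and_true]

theorem card_cover (i : Fin s) : (cover i).card = 2 * s - 2 := by
  have hdisj : Disjoint (univ.erase i ×ˢ {(0 : Fin s)}) ({i} ×ˢ univ.erase 0) := by
    rw [disjoint_left]
    rintro ⟨a, b⟩ h₁ h₂
    simp only [mem_product, mem_erase, mem_singleton] at h₁ h₂
    exact h₁.1.1 h₂.1
  rw [cover, card_union_of_disjoint hdisj, card_product, card_product, card_singleton,
    card_singleton, card_erase_of_mem (mem_univ _), card_erase_of_mem (mem_univ _), card_univ,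
    Fintype.card_fin]
  omega

theorem isMinVC_cover (i : Fin s) : IsMinVC (Hgraph s) (cover i) := by
  refine isMinVC_iff.2 ⟨fun u v huv => ?_, fun v hv => ⟨(i, 0), ?_, ?_⟩⟩
  · rw [adj_iff] at huv
    simp only [mem_cover, ne_eq] at huv ⊢
    grind
  · simp [mem_cover]
  · rw [mem_cover] at hv
    rw [adj_iff]
    grind

theorem card_le_of_isMinVC {W : Finset (Fin s × Fin s)} (hW : IsMinVC (Hgraph s) W) :
    W.card ≤ 2 * s - 2 := by
  have hpendant : ∀ x ∈ W, x.2 ≠ 0 → (x.1, 0) ∉ W := by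
    intro x hx hx2
    obtain ⟨u, huW, hxu⟩ := (isMinVC_iff.1 hW).2 x hx
    rwa [← (adj_iff_of_snd_ne_zero hx2).1 hxu]
  by_cases hmiss : ∃ i, (i, 0) ∉ W
  · obtain ⟨i, hi⟩ := hmiss
    have hsub : W ⊆ cover i := by
      intro x hx
      rw [mem_cover]
      by_cases hx2 : x.2 = 0
      · exact Or.inl ⟨fun hx1 => hi (by rwa [← hx1, ← hx2]), hx2⟩
      · refine Or.inr ⟨by_contra fun hx1 => hW.1.not_adj (hpendant x hx hx2) hi ?_, hx2⟩
        exact adj_iff.2 ⟨fun h => hx1 (congrArg Prod.fst h), Or.inl ⟨rfl, rfl⟩⟩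
    exact card_cover i ▸ card_le_card hsub
  · push Not at hmiss
    have hsub : W ⊆ univ ×ˢ {0} := fun x hx => mem_product.2
      ⟨mem_univ _, mem_singleton.2 (by_contra fun hx2 => hpendant x hx hx2 (hmiss x.1))⟩
    obtain ⟨u, huW, -⟩ := (isMinVC_iff.1 hW).2 (0, 0) (hmiss 0)
    have hs : 2 ≤ s := by
      have hu2 : u.2 ≠ 0 := fun h => huW (by simpa [← h] using hmiss u.1)
      have := Fin.pos_iff_ne_zero.2 hu2
      omega
    calc W.card ≤ (univ ×ˢ {(0 : Fin s)}).card := card_le_card hsub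
      _ = s := by simp
      _ ≤ 2 * s - 2 := by omega

end Hgraph

theorem stmt_6 (s : ℕ) (hs : 1 ≤ s) :
    Fintype.card (Fin s × Fin s) = s ^ 2 ∧
    tauMax (Hgraph s) = 2 * s - 2 ∧
    ((2 * s - 2 : ℕ) : ℝ) = 2 * Real.sqrt ((s : ℝ) ^ 2) - 2 := by
  have : NeZero s := ⟨by omega⟩
  refine ⟨by simp [sq], ?_, ?_⟩
  · exact tauMax_eq_of_isGreatest ⟨Hgraph.cover 0, Hgraph.isMinVC_cover 0, Hgraph.card_cover 0⟩
      fun W hW => Hgraph.card_le_of_isMinVC hW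
  · rw [Real.sqrt_sq (Nat.cast_nonneg s), Nat.cast_sub (by omega)]
    push_cast
    ring
end

section
/- For every integer n ≥ 2 there exists a chordal, gap-free simple graph G on n vertices with no isolated vertices such that τ_max(G) = ⌈2√n − 2⌉; hence the lower bound τ_max(G) ≥ ⌈2√n − 2⌉ is sharp for every n. -/
/-- `G` is gap-free: any two disjoint edges are joined by a third edge meeting both. -/
def GapFree {V : Type*} (G : SimpleGraph V) : Prop :=
  ∀ ⦃a b c d : V⦄, G.Adj a b → G.Adj c d →
    ({a, b} : Set V) ∩ {c, d} = ∅ →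
    ∃ u v : V, G.Adj u v ∧ (u ∈ ({a, b} : Set V) ∨ v ∈ ({a, b} : Set V)) ∧
      (u ∈ ({c, d} : Set V) ∨ v ∈ ({c, d} : Set V))

/-- `G` is chordal: every cycle of length at least 4 has a chord, i.e. an edge between
two nonconsecutive vertices of the cycle. -/
def Chordal {V : Type*} (G : SimpleGraph V) : Prop :=
  ∀ k : ℕ, 4 ≤ k → ∀ f : ZMod k → V, Function.Injective f →
    (∀ i : ZMod k, G.Adj (f i) (f (i + 1))) →
    ∃ i j : ZMod k, G.Adj (f i) (f j) ∧ i + 1 ≠ j ∧ j + 1 ≠ i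

/-! Take a clique on `a` vertices and hang the remaining `n - a` vertices on it as leaves, at most
`b` on each clique vertex and exactly `b` on one, where `a + b = t + 1` for `t = ⌈2√n - 2⌉` and
`n ≤ a (b + 1)`; the latter is possible because `4 n ≤ (t + 2)²`. Every edge meets the clique, so
the graph is gap-free, and no cycle passes through a leaf, so it is chordal. A vertex cover misses
at most one clique vertex `v`; a minimal one is then the rest of the clique together with the
leaves at `v`, or else it is the whole clique. Hence `τ_max = a - 1 + b = t`. -/

open Finset

section VertexCover

variable {V : Type*} {G : SimpleGraph V}

theorem IsVC.eq_of_notMem_of_isClique {C W : Finset V} (hW : IsVC G W)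
    (hC : G.IsClique (C : Set V)) {u v : V} (hu : u ∈ C) (hv : v ∈ C) (huW : u ∉ W)
    (hvW : v ∉ W) : u = v := by
  by_contra huv
  rcases hW (hC hu hv huv) with h | h
  exacts [huW h, hvW h]

variable [DecidableEq V]

theorem isMinVC_iff_forall_mem_exists_adj_notMem {W : Finset V} :
    IsMinVC G W ↔ IsVC G W ∧ ∀ x ∈ W, ∃ y, G.Adj x y ∧ y ∉ W := by
  refine ⟨fun ⟨hW, hmin⟩ => ⟨hW, fun x hx => ?_⟩,
    fun ⟨hW, hex⟩ => ⟨hW, fun W' hW' hcov => ?_⟩⟩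
  · by_contra! hall
    refine hmin (W.erase x) (erase_ssubset hx) fun u v huv => ?_
    have hlocal : ∀ u v, G.Adj u v → u = x → v ∈ W.erase x := fun u v huv hu =>
      mem_erase.2 ⟨(hu ▸ huv).ne.symm, hall v (hu ▸ huv)⟩
    rcases hW huv with hu | hv
    · by_cases hux : u = x
      · exact .inr (hlocal u v huv hux)
      · exact .inl (mem_erase.2 ⟨hux, hu⟩)
    · by_cases hvx : v = x
      · exact .inl (hlocal v u huv.symm hvx)
      · exact .inr (mem_erase.2 ⟨hvx, hv⟩)
  · obtain ⟨x, hxW, hxW'⟩ := exists_of_ssubset hW'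
    obtain ⟨y, hxy, hyW⟩ := hex x hxW
    rcases hcov hxy with h | h
    · exact hxW' h
    · exact hyW (hW'.subset h)

theorem IsMinVC.eq_of_subset {C W : Finset V} (hCvc : IsVC G C) (hW : IsMinVC G W)
    (hCW : C ⊆ W) : W = C := by
  refine Subset.antisymm (fun x hx => ?_) hCW
  obtain ⟨y, hxy, hyW⟩ := (isMinVC_iff_forall_mem_exists_adj_notMem.1 hW).2 x hx
  exact (hCvc hxy).resolve_right fun hy => hyW (hCW hy)

variable [Fintype V] [DecidableRel G.Adj] {C W : Finset V}

theorem IsMinVC.subset_erase_union (hC : G.IsClique (C : Set V)) (hCvc : IsVC G C)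
    (hW : IsMinVC G W) {v : V} (hv : v ∈ C) (hvW : v ∉ W) :
    W ⊆ C.erase v ∪ (G.neighborFinset v \ C) := by
  rw [isMinVC_iff_forall_mem_exists_adj_notMem] at hW
  intro x hx
  have hxv : x ≠ v := fun h => hvW (h ▸ hx)
  by_cases hxC : x ∈ C
  · exact mem_union_left _ (mem_erase.2 ⟨hxv, hxC⟩)
  · obtain ⟨y, hxy, hyW⟩ := hW.2 x hx
    -- the neighbour `y` lies in `C` outside `W`, and only `v` can do so
    have hyv : y = v :=
      hW.1.eq_of_notMem_of_isClique hC ((hCvc hxy).resolve_left hxC) hv hyW hvW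
    exact mem_union_right _
      (mem_sdiff.2 ⟨(G.mem_neighborFinset _ _).2 (hyv ▸ hxy.symm), hxC⟩)

theorem isMinVC_erase_union (hC : G.IsClique (C : Set V)) (hCvc : IsVC G C) {v : V}
    (hv : v ∈ C) : IsMinVC G (C.erase v ∪ (G.neighborFinset v \ C)) := by
  set W := C.erase v ∪ (G.neighborFinset v \ C)
  have hcov_of_mem : ∀ x y, G.Adj x y → x ∈ C → x ∈ W ∨ y ∈ W := by
    intro x y hxy hx
    by_cases hxv : x = v
    · subst hxv
      by_cases hy : y ∈ C
      · exact .inr (mem_union_left _ (mem_erase.2 ⟨hxy.ne.symm, hy⟩))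
      · exact .inr (mem_union_right _ (mem_sdiff.2 ⟨(G.mem_neighborFinset _ _).2 hxy, hy⟩))
    · exact .inl (mem_union_left _ (mem_erase.2 ⟨hxv, hx⟩))
  refine isMinVC_iff_forall_mem_exists_adj_notMem.2
    ⟨fun x y hxy => ?_, fun x hx => ⟨v, ?_, by simp [W]⟩⟩
  · rcases hCvc hxy with hx | hy
    · exact hcov_of_mem x y hxy hx
    · exact (hcov_of_mem y x hxy.symm hy).symm
  · rcases mem_union.1 hx with hx | hx
    · exact hC (mem_erase.1 hx).2 hv (mem_erase.1 hx).1
    · exact ((G.mem_neighborFinset _ _).1 (mem_sdiff.1 hx).1).symm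

theorem IsMinVC.card_add_one_le (hC : G.IsClique (C : Set V)) (hCvc : IsVC G C) {b : ℕ}
    (hb : ∀ v ∈ C, #(G.neighborFinset v \ C) ≤ b) (hne : C.Nonempty) (hW : IsMinVC G W) :
    #W + 1 ≤ #C + b := by
  by_cases hCW : C ⊆ W
  · obtain rfl := hW.eq_of_subset hCvc hCW
    obtain ⟨v, hv⟩ := hne
    obtain ⟨y, hvy, hyW⟩ := (isMinVC_iff_forall_mem_exists_adj_notMem.1 hW).2 v hv
    have hpos : 0 < #(G.neighborFinset v \ W) :=
      card_pos.2 ⟨y, mem_sdiff.2 ⟨(G.mem_neighborFinset _ _).2 hvy, hyW⟩⟩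
    have := hb v hv
    omega
  · obtain ⟨v, hv, hvW⟩ := not_subset.1 hCW
    have := hb v hv
    have := card_pos.2 ⟨v, hv⟩
    calc #W + 1 ≤ #(C.erase v ∪ (G.neighborFinset v \ C)) + 1 := by
          gcongr; exact hW.subset_erase_union hC hCvc hv hvW
      _ ≤ #(C.erase v) + #(G.neighborFinset v \ C) + 1 := by gcongr; exact card_union_le _ _
      _ ≤ #C + b := by rw [card_erase_of_mem hv]; omega

theorem tauMax_add_one_eq (hC : G.IsClique (C : Set V)) (hCvc : IsVC G C) {b : ℕ}
    (hb : ∀ v ∈ C, #(G.neighborFinset v \ C) ≤ b) {v : V} (hv : v ∈ C)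
    (hvb : #(G.neighborFinset v \ C) = b) : tauMax G + 1 = #C + b := by
  have hCpos := card_pos.2 ⟨v, hv⟩
  have hcard : #(C.erase v ∪ (G.neighborFinset v \ C)) = #C - 1 + b := by
    rw [card_union_of_disjoint (disjoint_sdiff.mono_left (erase_subset v C)),
      card_erase_of_mem hv, hvb]
  have hmax : IsGreatest {k | ∃ W, IsMinVC G W ∧ #W = k} (#C - 1 + b) := by
    refine ⟨⟨_, isMinVC_erase_union hC hCvc hv, hcard⟩, ?_⟩
    rintro _ ⟨W, hW, rfl⟩
    have := hW.card_add_one_le hC hCvc hb ⟨v, hv⟩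
    omega
  rw [tauMax, hmax.csSup_eq]
  omega

end VertexCover

section SplitGraph

variable {V : Type*} {G : SimpleGraph V}

theorem chordal_of_isClique_of_pendant {C : Set V} (hC : G.IsClique C)
    (hpendant : ∀ v ∉ C, ∀ u w, G.Adj v u → G.Adj v w → u = w) : Chordal G := by
  intro k hk f hf hadj
  have hne : ∀ m : ℕ, 0 < m → m < k → (m : ZMod k) ≠ 0 := fun m hm hmk h =>
    absurd (Nat.le_of_dvd hm ((ZMod.natCast_eq_zero_iff m k).1 h)) (by omega)
  -- a vertex of the cycle outside `C` would have its two distinct cycle neighbours equal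
  have hmem : ∀ i, f i ∈ C := by
    intro i
    by_contra hi
    have h := hf (hpendant _ hi _ _ (hadj i) (by simpa using (hadj (i - 1)).symm))
    exact hne 2 (by norm_num) (by omega) (by push_cast; linear_combination h)
  refine ⟨0, 2, hC (hmem 0) (hmem 2) (hf.ne fun h => hne 2 (by norm_num) (by omega) ?_), ?_, ?_⟩
  · push_cast; linear_combination -h
  · exact fun h => hne 1 (by norm_num) (by omega) (by push_cast; linear_combination -h)
  · exact fun h => hne 3 (by norm_num) (by omega) (by push_cast; linear_combination h)

theorem gapFree_of_isClique_of_isVC {C : Finset V} (hC : G.IsClique (C : Set V))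
    (hCvc : IsVC G C) : GapFree G := by
  have hend : ∀ ⦃x y⦄, G.Adj x y → ∃ u ∈ ({x, y} : Set V), u ∈ C := fun x y hxy =>
    (hCvc hxy).elim (fun hx => ⟨x, .inl rfl, hx⟩) (fun hy => ⟨y, .inr rfl, hy⟩)
  intro a b c d hab hcd hdisj
  obtain ⟨u, hu, huC⟩ := hend hab
  obtain ⟨v, hv, hvC⟩ := hend hcd
  have huv : u ≠ v := fun h => Set.eq_empty_iff_forall_notMem.1 hdisj u ⟨hu, h ▸ hv⟩
  exact ⟨u, v, hC huC hvC huv, .inl hu, .inr hv⟩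

end SplitGraph

section PendantClique

variable {V : Type*}

/-- The clique on `C` with every vertex `v ∉ C` attached as a leaf to `p v`. -/
def pendantClique (C : Finset V) (p : V → V) : SimpleGraph V :=
  SimpleGraph.fromRel fun u v => u ∈ C ∧ v ∈ C ∨ u ∉ C ∧ v = p u

variable {C : Finset V} {p : V → V}

theorem isClique_pendantClique : (pendantClique C p).IsClique (C : Set V) :=
  fun _ hu _ hv huv => ⟨huv, .inl (.inl ⟨hu, hv⟩)⟩

theorem pendantClique_adj_of_notMem (hp : ∀ v ∉ C, p v ∈ C) {u v : V} (hv : v ∉ C) :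
    (pendantClique C p).Adj v u ↔ u = p v := by
  simp only [pendantClique, SimpleGraph.fromRel_adj]
  grind

theorem isVC_pendantClique (hp : ∀ v ∉ C, p v ∈ C) : IsVC (pendantClique C p) C := by
  intro u v huv
  by_contra! h
  exact h.2 ((pendantClique_adj_of_notMem hp h.1).1 huv ▸ hp u h.1)

theorem chordal_pendantClique (hp : ∀ v ∉ C, p v ∈ C) : Chordal (pendantClique C p) :=
  chordal_of_isClique_of_pendant isClique_pendantClique fun _ hv _ _ hu hw =>
    ((pendantClique_adj_of_notMem hp hv).1 hu).trans
      ((pendantClique_adj_of_notMem hp hv).1 hw).symm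

theorem gapFree_pendantClique (hp : ∀ v ∉ C, p v ∈ C) : GapFree (pendantClique C p) :=
  gapFree_of_isClique_of_isVC isClique_pendantClique (isVC_pendantClique hp)

theorem pendantClique_exists_adj (hp : ∀ v ∉ C, p v ∈ C) (hC : 1 < #C) (v : V) :
    ∃ u, (pendantClique C p).Adj v u := by
  by_cases hv : v ∈ C
  · obtain ⟨u, hu, huv⟩ := exists_mem_ne hC v
    exact ⟨u, isClique_pendantClique hv hu huv.symm⟩
  · exact ⟨p v, (pendantClique_adj_of_notMem hp hv).2 rfl⟩

theorem mem_neighborFinset_pendantClique_sdiff [Fintype V] [DecidableEq V]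
    [DecidableRel (pendantClique C p).Adj]
    (hp : ∀ v ∉ C, p v ∈ C) {c x : V} :
    x ∈ (pendantClique C p).neighborFinset c \ C ↔ x ∉ C ∧ p x = c := by
  rw [mem_sdiff, SimpleGraph.mem_neighborFinset, SimpleGraph.adj_comm]
  exact ⟨fun ⟨h, hx⟩ => ⟨hx, ((pendantClique_adj_of_notMem hp hx).1 h).symm⟩,
    fun ⟨hx, h⟩ => ⟨(pendantClique_adj_of_notMem hp hx).2 h.symm, hx⟩⟩

end PendantClique

section CliqueWithBlocks

variable {n a b : ℕ}

def lowVertices (n a : ℕ) : Finset (Fin n) := {x | (x : ℕ) < a}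

theorem mem_lowVertices {x : Fin n} : x ∈ lowVertices n a ↔ (x : ℕ) < a := by
  simp [lowVertices]

theorem card_lowVertices (han : a ≤ n) : #(lowVertices n a) = a := by
  rw [lowVertices, Fin.card_filter_val_lt, min_eq_right han]

/-- The leaves `a, a + 1, …` are attached in consecutive blocks of `b` to `0, 1, …`. -/
def blockParent (a b : ℕ) (x : Fin n) : Fin n :=
  ⟨(x - a) / b, (Nat.div_le_self _ _).trans_lt ((Nat.sub_le _ _).trans_lt x.isLt)⟩

abbrev cliqueWithBlocks (n a b : ℕ) : SimpleGraph (Fin n) :=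
  pendantClique (lowVertices n a) (blockParent a b)

theorem pos_of_le_val_of_le_mul_succ (hna : n ≤ a * (b + 1)) {x : Fin n} (hx : a ≤ x) :
    0 < b := by
  by_contra! hb
  have := x.isLt
  simp_all only [nonpos_iff_eq_zero, zero_add, mul_one]
  omega

theorem blockParent_mem_lowVertices (hna : n ≤ a * (b + 1)) :
    ∀ x ∉ lowVertices n a, blockParent a b x ∈ lowVertices n a := by
  intro x hx
  rw [mem_lowVertices, not_lt] at hx
  rw [mem_lowVertices, blockParent, Nat.div_lt_iff_lt_mul (pos_of_le_val_of_le_mul_succ hna hx)]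
  have := x.isLt
  have : a * (b + 1) = a * b + a := by ring
  omega

variable [DecidableRel (cliqueWithBlocks n a b).Adj]

theorem card_neighborFinset_sdiff_le (hna : n ≤ a * (b + 1)) (c : Fin n) :
    #((cliqueWithBlocks n a b).neighborFinset c \ lowVertices n a) ≤ b := by
  calc _ ≤ #(Ico (a + c * b) (a + c * b + b)) := by
        refine card_le_card_of_injOn Fin.val (fun x hx => ?_) Fin.val_injective.injOn
        obtain ⟨hxa, rfl⟩ :=
          (mem_neighborFinset_pendantClique_sdiff (blockParent_mem_lowVertices hna)).1 hx
        rw [mem_lowVertices, not_lt] at hxa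
        have := Nat.div_mul_le_self (x - a) b
        have := Nat.lt_div_mul_add (a := x - a) (pos_of_le_val_of_le_mul_succ hna hxa)
        simp only [coe_Ico, Set.mem_Ico, blockParent]
        omega
    _ = b := by simp

theorem exists_card_neighborFinset_sdiff_eq (ha : 1 ≤ a) (hab : a + b ≤ n)
    (hna : n ≤ a * (b + 1)) :
    ∃ c ∈ lowVertices n a,
      #((cliqueWithBlocks n a b).neighborFinset c \ lowVertices n a) = b := by
  refine ⟨⟨0, by omega⟩, mem_lowVertices.2 ha,
    (card_neighborFinset_sdiff_le hna _).antisymm ?_⟩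
  have hfirst : ∀ m ∈ Ico a (a + b), m < n := fun m hm => by rw [mem_Ico] at hm; omega
  calc b = #((Ico a (a + b)).attachFin hfirst) := by simp
    _ ≤ _ := by
      refine card_le_card fun x hx => ?_
      rw [mem_attachFin, mem_Ico] at hx
      rw [mem_neighborFinset_pendantClique_sdiff (blockParent_mem_lowVertices hna),
        mem_lowVertices]
      exact ⟨by omega, Fin.ext (Nat.div_eq_of_lt (by omega))⟩

end CliqueWithBlocks

theorem tauMax_cliqueWithBlocks {n a b : ℕ} (ha : 1 ≤ a) (hab : a + b ≤ n)
    (hna : n ≤ a * (b + 1)) : tauMax (cliqueWithBlocks n a b) + 1 = a + b := by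
  classical
  obtain ⟨c, hc, hcb⟩ := exists_card_neighborFinset_sdiff_eq ha hab hna
  have hp := blockParent_mem_lowVertices hna
  rw [tauMax_add_one_eq isClique_pendantClique (isVC_pendantClique hp)
    (fun c _ => card_neighborFinset_sdiff_le hna c) hc hcb, card_lowVertices (by omega)]

theorem le_div_mul_of_four_mul_le_sq {n t : ℕ} (h : 4 * n ≤ (t + 2) ^ 2) :
    n ≤ (t + 3) / 2 * (t / 2 + 1) := by
  obtain ⟨s, rfl | rfl⟩ := Nat.even_or_odd' t
  · have : (2 * s + 3) / 2 = s + 1 := by omega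
    rw [this, Nat.mul_div_cancel_left _ two_pos]
    nlinarith
  · have h1 : (2 * s + 1 + 3) / 2 = s + 2 := by omega
    have h2 : (2 * s + 1) / 2 = s := by omega
    rw [h1, h2]
    nlinarith

theorem four_mul_le_sq_ceil_two_sqrt_sub_two (n : ℕ) :
    4 * n ≤ (⌈2 * √n - 2⌉₊ + 2) ^ 2 := by
  have hceil := Nat.le_ceil (2 * √n - 2)
  have hsq := Real.sq_sqrt n.cast_nonneg
  have := Real.sqrt_nonneg n
  exact_mod_cast (show (4 * n : ℝ) ≤ (⌈2 * √n - 2⌉₊ + 2) ^ 2 by nlinarith)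

theorem ceil_two_sqrt_sub_two_add_one_le {n : ℕ} (hn : 1 ≤ n) :
    ⌈2 * √n - 2⌉₊ + 1 ≤ n := by
  have hsq := Real.sq_sqrt n.cast_nonneg
  have : 2 * √n - 2 ≤ ((n - 1 : ℕ) : ℝ) := by
    rw [Nat.cast_sub hn]
    push_cast
    nlinarith [sq_nonneg (√n - 1)]
  have := Nat.ceil_le.2 this
  omega

theorem one_le_ceil_two_sqrt_sub_two {n : ℕ} (hn : 2 ≤ n) : 1 ≤ ⌈2 * √n - 2⌉₊ := by
  have : (1 : ℝ) < √n := Real.lt_sqrt zero_le_one |>.2 (by norm_num; exact_mod_cast hn)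
  exact Nat.ceil_pos.2 (by linarith)

theorem stmt_7 (n : ℕ) (hn : 2 ≤ n) :
    ∃ G : SimpleGraph (Fin n), Chordal G ∧ GapFree G ∧
      (∀ v : Fin n, ∃ u : Fin n, G.Adj v u) ∧
      tauMax G = ⌈2 * Real.sqrt n - 2⌉₊ := by
  set t := ⌈2 * Real.sqrt n - 2⌉₊
  have ht : 1 ≤ t := one_le_ceil_two_sqrt_sub_two hn
  have htn : t + 1 ≤ n := ceil_two_sqrt_sub_two_add_one_le (by omega)
  have hna : n ≤ (t + 3) / 2 * (t / 2 + 1) :=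
    le_div_mul_of_four_mul_le_sq (four_mul_le_sq_ceil_two_sqrt_sub_two n)
  have hp := blockParent_mem_lowVertices hna
  refine ⟨cliqueWithBlocks n ((t + 3) / 2) (t / 2), chordal_pendantClique hp,
    gapFree_pendantClique hp, pendantClique_exists_adj hp ?_, ?_⟩
  · rw [card_lowVertices (by omega)]
    omega
  · have := tauMax_cliqueWithBlocks (by omega) (by omega) hna
    omega
end

section
/- Let s, t, a be positive integers with t ≤ s. The graph G obtained from the complete graph K_s on x_1,…,x_s by attaching to each x_i a private independent set W_i of size t − 1 and additionally private independent sets B_i with |B_1| = a and |B_i| ≤ a, all sets pairwise disjoint, satisfies τ_max(G) = (s − 1) + (t − 1) + a. -/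
theorem stmt_17 {V : Type*} [Fintype V] [DecidableEq V] (G : SimpleGraph V)
    (s t a : ℕ) (hs : 1 ≤ s) (ht : 1 ≤ t) (ha : 1 ≤ a) (hts : t ≤ s)
    (x : Fin s → V) (hx : Function.Injective x)
    (W B : Fin s → Finset V)
    (hWcard : ∀ i : Fin s, (W i).card = t - 1)
    (hB0 : (B ⟨0, hs⟩).card = a)
    (hBle : ∀ i : Fin s, (B i).card ≤ a)
    (hdisj : Pairwise fun i j : Fin s => Disjoint (W i ∪ B i) (W j ∪ B j))
    (hWB : ∀ i : Fin s, Disjoint (W i) (B i))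
    (hxnot : ∀ i j : Fin s, x i ∉ W j ∪ B j)
    (hvert : ∀ v : V, (∃ i : Fin s, v = x i) ∨ ∃ i : Fin s, v ∈ W i ∪ B i)
    (hadj : ∀ u v : V, G.Adj u v ↔
      ((∃ i j : Fin s, i ≠ j ∧ u = x i ∧ v = x j) ∨
        (∃ i : Fin s, (u = x i ∧ v ∈ W i ∪ B i) ∨ (v = x i ∧ u ∈ W i ∪ B i)))) :
    tauMax G = (s - 1) + (t - 1) + a := by
  classical
  set i0 : Fin s := ⟨0, hs⟩ with hi0
  have huniq : ∀ {v : V} {i j : Fin s}, v ∈ W i ∪ B i → v ∈ W j ∪ B j → i = j := by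
    intro v i j hi hj
    by_contra hne
    exact Finset.disjoint_left.mp (hdisj hne) hi hj
  have hcardim : (Finset.univ.image x).card = s := by
    rw [Finset.card_image_of_injective _ hx, Finset.card_univ, Fintype.card_fin]
  set D : Fin s → Finset V :=
    fun i => ((Finset.univ.image x).erase (x i)) ∪ (W i ∪ B i) with hD
  have hDcard : ∀ i, (D i).card = (s - 1) + (t - 1) + (B i).card := by
    intro i
    have h1 : Disjoint ((Finset.univ.image x).erase (x i)) (W i ∪ B i) := by
      rw [Finset.disjoint_left]
      intro u hu hu2
      obtain ⟨j, _, rfl⟩ := Finset.mem_image.mp (Finset.mem_of_mem_erase hu)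
      exact hxnot j i hu2
    rw [hD]
    rw [Finset.card_union_of_disjoint h1, Finset.card_union_of_disjoint (hWB i),
      Finset.card_erase_of_mem (Finset.mem_image_of_mem x (Finset.mem_univ i)),
      hcardim, hWcard i]
    omega
  have hDVC : ∀ i, IsVC G (D i) := by
    intro i u v huv
    rw [hadj] at huv
    rcases huv with ⟨j, k, hjk, rfl, rfl⟩ | ⟨j, ⟨rfl, hv⟩ | ⟨rfl, hu⟩⟩
    · by_cases hji : j = i
      · subst hji
        refine Or.inr (Finset.mem_union_left _ (Finset.mem_erase.mpr
          ⟨hx.ne (Ne.symm hjk), Finset.mem_image_of_mem x (Finset.mem_univ k)⟩))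
      · exact Or.inl (Finset.mem_union_left _ (Finset.mem_erase.mpr
          ⟨hx.ne hji, Finset.mem_image_of_mem x (Finset.mem_univ j)⟩))
    · by_cases hji : j = i
      · subst hji; exact Or.inr (Finset.mem_union_right _ hv)
      · exact Or.inl (Finset.mem_union_left _ (Finset.mem_erase.mpr
          ⟨hx.ne hji, Finset.mem_image_of_mem x (Finset.mem_univ j)⟩))
    · by_cases hji : j = i
      · subst hji; exact Or.inl (Finset.mem_union_right _ hu)
      · exact Or.inr (Finset.mem_union_left _ (Finset.mem_erase.mpr
          ⟨hx.ne hji, Finset.mem_image_of_mem x (Finset.mem_univ j)⟩))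
  have hDmin : ∀ i, IsMinVC G (D i) := by
    intro i
    refine ⟨hDVC i, ?_⟩
    intro W' hss hVC
    obtain ⟨v, hvD, hvW'⟩ := Finset.exists_of_ssubset hss
    have hxiD : x i ∉ D i := by
      rw [hD]
      simp only [Finset.mem_union, Finset.mem_erase, not_or]
      exact ⟨fun h => h.1 rfl, fun h => hxnot i i (Finset.mem_union_left _ h),
        fun h => hxnot i i (Finset.mem_union_right _ h)⟩
    have hxiW' : x i ∉ W' := fun h => hxiD (hss.1 h)
    rcases Finset.mem_union.mp hvD with hv | hv
    · obtain ⟨hne, hmem⟩ := Finset.mem_erase.mp hv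
      obtain ⟨j, -, rfl⟩ := Finset.mem_image.mp hmem
      have hji : j ≠ i := fun h => hne (by rw [h])
      have hA : G.Adj (x i) (x j) :=
        (hadj _ _).mpr (Or.inl ⟨i, j, Ne.symm hji, rfl, rfl⟩)
      rcases hVC hA with h | h
      · exact hxiW' h
      · exact hvW' h
    · have hA : G.Adj (x i) v := (hadj _ _).mpr (Or.inr ⟨i, Or.inl ⟨rfl, hv⟩⟩)
      rcases hVC hA with h | h
      · exact hxiW' h
      · exact hvW' h
  have hub : ∀ C : Finset V, IsMinVC G C → C.card ≤ (s - 1) + (t - 1) + a := by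
    intro C hC
    have hrem : ∀ v ∈ C, ∀ j, v ∈ W j ∪ B j → x j ∈ C → False := by
      intro v hvC j hvj hxjC
      apply hC.2 (C.erase v) (Finset.erase_ssubset hvC)
      intro u w huw
      have hcov := hC.1 huw
      have hvne : x j ≠ v := fun hh => hxnot j j (hh ▸ hvj)
      have key : ∀ z, G.Adj v z → z = x j := by
        intro z hz
        rw [hadj] at hz
        rcases hz with ⟨p, q, hpq, hvp, hzq⟩ | ⟨k, ⟨hvk, _⟩ | ⟨hzk, hvk⟩⟩
        · exact absurd (hvp ▸ hvj) (hxnot p j)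
        · exact absurd (hvk ▸ hvj) (hxnot k j)
        · rw [hzk, huniq hvk hvj]
      rcases hcov with h | h
      · by_cases hu : u = v
        · subst hu
          have hw := key w huw
          subst hw
          exact Or.inr (Finset.mem_erase.mpr ⟨hvne, hxjC⟩)
        · exact Or.inl (Finset.mem_erase.mpr ⟨hu, h⟩)
      · by_cases hw : w = v
        · subst hw
          have hu := key u huw.symm
          subst hu
          exact Or.inl (Finset.mem_erase.mpr ⟨hvne, hxjC⟩)
        · exact Or.inr (Finset.mem_erase.mpr ⟨hw, h⟩)
    by_cases hall : ∀ i, x i ∈ C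
    · have hsub : C ⊆ Finset.univ.image x := by
        intro v hv
        rcases hvert v with ⟨i, rfl⟩ | ⟨i, hvi⟩
        · exact Finset.mem_image_of_mem x (Finset.mem_univ i)
        · exact (hrem v hv i hvi (hall i)).elim
      have := Finset.card_le_card hsub
      rw [hcardim] at this
      omega
    · push_neg at hall
      obtain ⟨i, hxi⟩ := hall
      have hsub : C ⊆ D i := by
        intro v hv
        rcases hvert v with ⟨j, rfl⟩ | ⟨j, hvj⟩
        · have hji : j ≠ i := fun h => hxi (h ▸ hv)
          exact Finset.mem_union_left _ (Finset.mem_erase.mpr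
            ⟨hx.ne hji, Finset.mem_image_of_mem x (Finset.mem_univ j)⟩)
        · by_cases hji : j = i
          · subst hji; exact Finset.mem_union_right _ hvj
          · have hA : G.Adj (x i) (x j) :=
              (hadj _ _).mpr (Or.inl ⟨i, j, Ne.symm hji, rfl, rfl⟩)
            have hxjC : x j ∈ C := by
              rcases hC.1 hA with h | h
              · exact absurd h hxi
              · exact h
            exact (hrem v hv j hvj hxjC).elim
      have h1 := Finset.card_le_card hsub
      rw [hDcard i] at h1
      have h2 := hBle i
      omega
  have hmem : ((s - 1) + (t - 1) + a) ∈
      {k : ℕ | ∃ W : Finset V, IsMinVC G W ∧ W.card = k} :=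
    ⟨D i0, hDmin i0, by rw [hDcard i0, hB0]⟩
  have hbdd : BddAbove {k : ℕ | ∃ W : Finset V, IsMinVC G W ∧ W.card = k} := by
    refine ⟨(s - 1) + (t - 1) + a, ?_⟩
    rintro k ⟨C, hC, rfl⟩
    exact hub C hC
  refine le_antisymm ?_ (le_csSup hbdd hmem)
  refine csSup_le ⟨_, hmem⟩ ?_
  rintro k ⟨C, hC, rfl⟩
  exact hub C hC
end
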